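/- Let B be the closed unit ball in ℝ^d and let f be an integrable function supported in B with ∫_B f(y) dy = 0. Then for every x with |x| > 2: (i) (f * φ_ε)(x) = 0 for every 0 < ε < |x|/2, and (ii) there is a constant C > 0 depending only on φ and d such that M_φ(f)(x) ≤ C |x|^{−(d+1)} ∫_B |y| |f(y)| dy. -/

import Mathlib

open MeasureTheory Metric Real ENNReal NNReal

/-- The dilate `φ_ε(x) = ε^{-d} φ(x/ε)` convolved with `f`, evaluated at `x`. -/
noncomputable def convPhi {d : ℕ} (φ : EuclideanSpace ℝ (Fin d) → ℝ)
    (f : EuclideanSpace ℝ (Fin d) → ℂ) (ε : ℝ) (x : EuclideanSpace ℝ (Fin d)) : ℂ :=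
  ∫ y, ((ε ^ d)⁻¹ * φ (ε⁻¹ • (x - y))) • f y

/-- The smooth maximal function `M_φ(f)(x) = sup_{ε>0} |(f * φ_ε)(x)|`. -/
noncomputable def MPhi {d : ℕ} (φ : EuclideanSpace ℝ (Fin d) → ℝ)
    (f : EuclideanSpace ℝ (Fin d) → ℂ) (x : EuclideanSpace ℝ (Fin d)) : ℝ≥0∞ :=
  ⨆ (ε : ℝ) (_ : 0 < ε), (‖convPhi φ f ε x‖₊ : ℝ≥0∞)

lemma convPhi_eq_zero_aux {d : ℕ} (φ : EuclideanSpace ℝ (Fin d) → ℝ)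
    (hφ_supp : Function.support φ ⊆ Metric.closedBall 0 1)
    (f : EuclideanSpace ℝ (Fin d) → ℂ)
    (hsupp : ∀ y, y ∉ Metric.closedBall (0 : EuclideanSpace ℝ (Fin d)) 1 → f y = 0)
    (x : EuclideanSpace ℝ (Fin d)) (hx : 2 < ‖x‖)
    (ε : ℝ) (hε : 0 < ε) (hε2 : ε < ‖x‖ / 2) : convPhi φ f ε x = 0 := by
  have h0 : ∀ y, ((ε ^ d)⁻¹ * φ (ε⁻¹ • (x - y))) • f y = 0 := by
    intro y
    by_cases hy : f y = 0
    · simp [hy]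
    · have hyB : y ∈ Metric.closedBall (0 : EuclideanSpace ℝ (Fin d)) 1 := by
        by_contra h; exact hy (hsupp y h)
      have hny : ‖y‖ ≤ 1 := by simpa [mem_closedBall, dist_zero_right] using hyB
      have hxy : ε < ‖x - y‖ := by
        have h1 : ‖x‖ - ‖y‖ ≤ ‖x - y‖ := norm_sub_norm_le x y
        linarith
      have hφ0 : φ (ε⁻¹ • (x - y)) = 0 := by
        by_contra h
        have hmem := hφ_supp (Function.mem_support.2 h)
        rw [mem_closedBall, dist_zero_right, norm_smul, Real.norm_eq_abs,
          abs_of_pos (inv_pos.2 hε)] at hmem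
        have h1 : 1 < ε⁻¹ * ‖x - y‖ := by
          calc (1:ℝ) = ε⁻¹ * ε := (inv_mul_cancel₀ hε.ne').symm
            _ < ε⁻¹ * ‖x - y‖ := mul_lt_mul_of_pos_left hxy (inv_pos.2 hε)
        linarith
      simp [hφ0]
  simp only [convPhi]
  exact integral_eq_zero_of_ae (Filter.Eventually.of_forall h0)

/-- **Decay of the smooth maximal function of a mean-zero function.** If `f` is integrable,
supported in the closed unit ball `B` and has mean zero, then for `|x| > 2`:
(i) `(f * φ_ε)(x) = 0` for `0 < ε < |x|/2`, and
(ii) `M_φ(f)(x) ≤ C |x|^{-(d+1)} ∫_B |y||f(y)| dy` with `C` depending only on `φ` and `d`. -/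
theorem smooth_maximal_decay {d : ℕ} (φ : EuclideanSpace ℝ (Fin d) → ℝ)
    (hφ_nonneg : ∀ x, 0 ≤ φ x) (hφ_smooth : ContDiff ℝ (⊤ : ℕ∞) φ)
    (hφ_supp : Function.support φ ⊆ Metric.closedBall 0 1)
    (hφ_int : ∫ x, φ x = 1)
    (hφ_const : ∃ c : ℝ, ∀ x : EuclideanSpace ℝ (Fin d), ‖x‖ ≤ 1 / 2 → φ x = c) :
    (∀ f : EuclideanSpace ℝ (Fin d) → ℂ, Integrable f →
      (∀ y, y ∉ Metric.closedBall (0 : EuclideanSpace ℝ (Fin d)) 1 → f y = 0) →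
      (∫ y in Metric.closedBall (0 : EuclideanSpace ℝ (Fin d)) 1, f y = 0) →
      ∀ x : EuclideanSpace ℝ (Fin d), 2 < ‖x‖ →
        ∀ ε : ℝ, 0 < ε → ε < ‖x‖ / 2 → convPhi φ f ε x = 0) ∧
    ∃ C : ℝ, 0 < C ∧
      ∀ f : EuclideanSpace ℝ (Fin d) → ℂ, Integrable f →
      (∀ y, y ∉ Metric.closedBall (0 : EuclideanSpace ℝ (Fin d)) 1 → f y = 0) →
      (∫ y in Metric.closedBall (0 : EuclideanSpace ℝ (Fin d)) 1, f y = 0) →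
      ∀ x : EuclideanSpace ℝ (Fin d), 2 < ‖x‖ →
        MPhi φ f x ≤ ENNReal.ofReal
          (C / ‖x‖ ^ (d + 1) *
            ∫ y in Metric.closedBall (0 : EuclideanSpace ℝ (Fin d)) 1, ‖y‖ * ‖f y‖) := by
  have hcs : HasCompactSupport φ :=
    HasCompactSupport.of_support_subset_isCompact (isCompact_closedBall 0 1) hφ_supp
  obtain ⟨L, hL⟩ := ContDiff.lipschitzWith_of_hasCompactSupport hcs hφ_smooth (by simp)
  obtain ⟨M, hM⟩ := hcs.exists_bound_of_continuous hφ_smooth.continuous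
  refine ⟨fun f hf hsupp hmean x hx ε hε hε2 =>
    convPhi_eq_zero_aux φ hφ_supp f hsupp x hx ε hε hε2,
    ((L : ℝ) + 1) * 2 ^ (d + 1), by positivity, ?_⟩
  intro f hf hsupp hmean x hx
  have hx0 : (0:ℝ) < ‖x‖ := by linarith
  set I := ∫ y in Metric.closedBall (0 : EuclideanSpace ℝ (Fin d)) 1, ‖y‖ * ‖f y‖ with hIdef
  have hInorm : Integrable (fun y => ‖y‖ * ‖f y‖) := by
    refine Integrable.mono hf.norm
      (continuous_norm.aestronglyMeasurable.mul hf.1.norm) (Filter.Eventually.of_forall ?_)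
    intro y
    by_cases hy : f y = 0
    · simp [hy]
    · have hyB : y ∈ Metric.closedBall (0 : EuclideanSpace ℝ (Fin d)) 1 := by
        by_contra h; exact hy (hsupp y h)
      have hny : ‖y‖ ≤ 1 := by simpa [mem_closedBall, dist_zero_right] using hyB
      have h1 : ‖y‖ * ‖f y‖ ≤ ‖f y‖ := mul_le_of_le_one_left (norm_nonneg _) hny
      have h2 : (0:ℝ) ≤ ‖y‖ * ‖f y‖ := by positivity
      simp only [Real.norm_eq_abs, norm_norm, abs_of_nonneg h2]
      simpa using h1
  have hIeq : ∫ y, ‖y‖ * ‖f y‖ = I :=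
    (setIntegral_eq_integral_of_forall_compl_eq_zero
      (fun y hy => by simp [hsupp y hy])).symm
  have hI0 : 0 ≤ I :=
    setIntegral_nonneg measurableSet_closedBall (fun y _ => by positivity)
  have hmean' : ∫ y, f y = 0 := by
    rw [← setIntegral_eq_integral_of_forall_compl_eq_zero hsupp]; exact hmean
  have key : ∀ ε : ℝ, 0 < ε →
      ‖convPhi φ f ε x‖ ≤ ((L : ℝ) + 1) * 2 ^ (d + 1) / ‖x‖ ^ (d + 1) * I := by
    intro ε hε
    rcases lt_or_ge ε (‖x‖ / 2) with h | h
    · rw [convPhi_eq_zero_aux φ hφ_supp f hsupp x hx ε hε h, norm_zero]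
      exact mul_nonneg (by positivity) hI0
    · have hεd : (0:ℝ) < ε ^ d := pow_pos hε d
      have hcont : Continuous (fun y : EuclideanSpace ℝ (Fin d) =>
          (ε ^ d)⁻¹ * φ (ε⁻¹ • (x - y))) :=
        continuous_const.mul (hφ_smooth.continuous.comp
          (((continuous_const.sub continuous_id).const_smul ε⁻¹)))
      have hInt1 : Integrable (fun y => ((ε ^ d)⁻¹ * φ (ε⁻¹ • (x - y))) • f y) := by
        refine Integrable.mono (hf.norm.const_mul ((ε ^ d)⁻¹ * M))
          (hcont.aestronglyMeasurable.smul hf.1) (Filter.Eventually.of_forall ?_)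
        intro y
        rw [norm_smul]
        have h1 : ‖(ε ^ d)⁻¹ * φ (ε⁻¹ • (x - y))‖ ≤ (ε ^ d)⁻¹ * M := by
          rw [norm_mul, Real.norm_eq_abs, abs_inv, abs_of_pos hεd]
          exact mul_le_mul_of_nonneg_left (hM _) (by positivity)
        calc ‖(ε ^ d)⁻¹ * φ (ε⁻¹ • (x - y))‖ * ‖f y‖
            ≤ ((ε ^ d)⁻¹ * M) * ‖f y‖ :=
              mul_le_mul_of_nonneg_right h1 (norm_nonneg _)
          _ ≤ ‖(ε ^ d)⁻¹ * M * ‖f y‖‖ := le_abs_self _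
      have hInt2 : Integrable (fun y => ((ε ^ d)⁻¹ * φ (ε⁻¹ • x)) • f y) :=
        hf.fun_smul _
      have h2 : ∫ y, ((ε ^ d)⁻¹ * φ (ε⁻¹ • x)) • f y = 0 := by
        rw [integral_smul, hmean', smul_zero]
      have keyeq : convPhi φ f ε x =
          ∫ y, ((ε ^ d)⁻¹ * (φ (ε⁻¹ • (x - y)) - φ (ε⁻¹ • x))) • f y := by
        simp only [convPhi]
        rw [← sub_zero (∫ y, ((ε ^ d)⁻¹ * φ (ε⁻¹ • (x - y))) • f y), ← h2,
          ← integral_sub hInt1 hInt2]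
        congr 1; funext y; rw [mul_sub, sub_smul]
      rw [keyeq]
      have hba : Integrable (fun y => (ε ^ (d + 1))⁻¹ * (L : ℝ) * (‖y‖ * ‖f y‖)) :=
        hInorm.const_mul _
      have hnb : ‖∫ y, ((ε ^ d)⁻¹ * (φ (ε⁻¹ • (x - y)) - φ (ε⁻¹ • x))) • f y‖
          ≤ ∫ y, (ε ^ (d + 1))⁻¹ * (L : ℝ) * (‖y‖ * ‖f y‖) := by
        refine norm_integral_le_of_norm_le hba (Filter.Eventually.of_forall ?_)
        intro y
        have hd2 : |φ (ε⁻¹ • (x - y)) - φ (ε⁻¹ • x)| ≤ (L : ℝ) * (ε⁻¹ * ‖y‖) := by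
          have hdd := hL.dist_le_mul (ε⁻¹ • (x - y)) (ε⁻¹ • x)
          rw [Real.dist_eq] at hdd
          refine hdd.trans (le_of_eq ?_)
          rw [dist_eq_norm, ← smul_sub]
          have hxy : (x - y) - x = -y := by abel
          rw [hxy, norm_smul, Real.norm_eq_abs, abs_inv, abs_of_pos hε, norm_neg]
        rw [norm_smul, Real.norm_eq_abs, abs_mul, abs_inv, abs_pow, abs_of_pos hε]
        calc (ε ^ d)⁻¹ * |φ (ε⁻¹ • (x - y)) - φ (ε⁻¹ • x)| * ‖f y‖
            ≤ (ε ^ d)⁻¹ * ((L : ℝ) * (ε⁻¹ * ‖y‖)) * ‖f y‖ := by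
              refine mul_le_mul_of_nonneg_right
                (mul_le_mul_of_nonneg_left hd2 (by positivity)) (norm_nonneg _)
          _ = (ε ^ (d + 1))⁻¹ * (L : ℝ) * (‖y‖ * ‖f y‖) := by
              rw [pow_succ, mul_inv]; ring
      have hval : ∫ y, (ε ^ (d + 1))⁻¹ * (L : ℝ) * (‖y‖ * ‖f y‖)
          = (ε ^ (d + 1))⁻¹ * (L : ℝ) * I := by
        rw [integral_const_mul, hIeq]
      rw [hval] at hnb
      refine hnb.trans ?_
      have hεbig : (‖x‖ / 2) ^ (d + 1) ≤ ε ^ (d + 1) :=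
        pow_le_pow_left₀ (by positivity) h _
      have hpos : (0:ℝ) < (‖x‖ / 2) ^ (d + 1) := by positivity
      have hinv : (ε ^ (d + 1))⁻¹ ≤ 2 ^ (d + 1) / ‖x‖ ^ (d + 1) := by
        calc (ε ^ (d + 1))⁻¹ ≤ ((‖x‖ / 2) ^ (d + 1))⁻¹ := by
              exact inv_anti₀ hpos hεbig
          _ = 2 ^ (d + 1) / ‖x‖ ^ (d + 1) := by rw [div_pow, inv_div]
      have h3 : (ε ^ (d + 1))⁻¹ * (L : ℝ) ≤
          2 ^ (d + 1) / ‖x‖ ^ (d + 1) * ((L : ℝ) + 1) := by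
        refine mul_le_mul hinv (by linarith [L.coe_nonneg]) L.coe_nonneg (by positivity)
      calc (ε ^ (d + 1))⁻¹ * (L : ℝ) * I
          ≤ 2 ^ (d + 1) / ‖x‖ ^ (d + 1) * ((L : ℝ) + 1) * I :=
            mul_le_mul_of_nonneg_right h3 hI0
        _ = ((L : ℝ) + 1) * 2 ^ (d + 1) / ‖x‖ ^ (d + 1) * I := by ring
  simp only [MPhi]
  refine iSup₂_le fun ε hε => ?_
  rw [← ENNReal.ofReal_coe_nnreal, coe_nnnorm]
  exact ENNReal.ofReal_le_ofReal (key ε hε)
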